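/- arXiv:1501.04253 — 2 statements merged into one kernel-verified Lean document; each statement's English description precedes it below -/
import Mathlib

section
/- Let g : ℝ → [0,1] be integrable and p > 1. Define u_p(x,t) = g(x)·((p-1) t g(x)^{p-1} + 1)^{-1/(p-1)}. Then for every φ ∈ C_c∞(ℝ × (0,∞)), ∫∫ u_p φ_t dx dt = ∫∫ u_p^p φ dx dt, i.e., u_p is a distributional solution of u_t = -u^p on ℝ × (0,∞). -/
open MeasureTheory

theorem stmt_13 (p : ℝ) (hp : 1 < p) (g : ℝ → ℝ) (hgint : Integrable g)
    (hg0 : ∀ x, 0 ≤ g x) (hg1 : ∀ x, g x ≤ 1)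
    (u : ℝ → ℝ → ℝ)
    (hu : ∀ x t, u x t = g x * ((p - 1) * t * g x ^ (p - 1) + 1) ^ (-(1 / (p - 1))))
    (φ : ℝ × ℝ → ℝ) (hφ : ContDiff ℝ (⊤ : ℕ∞) φ) (hφc : HasCompactSupport φ)
    (hφsupp : Function.support φ ⊆ {q : ℝ × ℝ | 0 < q.2}) :
    ∫ q : ℝ × ℝ, u q.1 q.2 * deriv (fun s => φ (q.1, s)) q.2 =
      ∫ q : ℝ × ℝ, (u q.1 q.2) ^ p * φ q := by
  have hp1 : (0:ℝ) < p - 1 := by linarith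
  have hp0 : p ≠ 0 := by linarith
  have hc : (-(1 / (p - 1))) * (p - 1) = -1 := by field_simp
  -- basic positivity facts
  have hXpos : ∀ x t, 0 ≤ t → 1 ≤ (p - 1) * t * g x ^ (p - 1) + 1 := by
    intro x t ht
    have h1 : 0 ≤ (p - 1) * t * g x ^ (p - 1) :=
      mul_nonneg (mul_nonneg hp1.le ht) (Real.rpow_nonneg (hg0 x) _)
    linarith
  -- derivative of u in t
  have hud : ∀ x t, 0 ≤ t → HasDerivAt (u x) (-(u x t ^ p)) t := by
    intro x t ht
    rcases eq_or_lt_of_le (hg0 x) with h0 | hgx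
    · have hux : u x = fun _ => (0:ℝ) := funext fun s => by simp [hu, ← h0]
      have : HasDerivAt (u x) 0 t := hux ▸ hasDerivAt_const t (0:ℝ)
      simpa [hux, Real.zero_rpow hp0] using this
    · have hX : (0:ℝ) < (p - 1) * t * g x ^ (p - 1) + 1 := lt_of_lt_of_le one_pos (hXpos x t ht)
      have hlin : HasDerivAt (fun s : ℝ => (p - 1) * s * g x ^ (p - 1) + 1)
          ((p - 1) * g x ^ (p - 1)) t := by
        have := (((hasDerivAt_id t).const_mul (p - 1)).mul_const (g x ^ (p - 1))).add_const 1
        simpa using this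
      have hrp : HasDerivAt (fun z : ℝ => z ^ (-(1 / (p - 1))))
          ((-(1 / (p - 1))) * ((p - 1) * t * g x ^ (p - 1) + 1) ^ ((-(1 / (p - 1))) - 1))
          ((p - 1) * t * g x ^ (p - 1) + 1) :=
        Real.hasDerivAt_rpow_const (Or.inl hX.ne')
      have hcomp := (hrp.comp t hlin).const_mul (g x)
      have hux : u x = fun s => g x * ((p - 1) * s * g x ^ (p - 1) + 1) ^ (-(1 / (p - 1))) :=
        funext fun s => hu x s
      rw [hux]
      refine hcomp.congr_deriv ?_
      symm
      -- value computation
      have hXle : (0:ℝ) ≤ (p - 1) * t * g x ^ (p - 1) + 1 := hX.le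
      have hmulpow : (g x * ((p - 1) * t * g x ^ (p - 1) + 1) ^ (-(1 / (p - 1)))) ^ p
          = g x ^ p * ((p - 1) * t * g x ^ (p - 1) + 1) ^ ((-(1 / (p - 1))) * p) := by
        rw [Real.mul_rpow (hg0 x) (Real.rpow_nonneg hXle _), Real.rpow_mul hXle]
      have hgp : g x ^ p = g x * g x ^ (p - 1) := by
        have h := Real.rpow_add hgx 1 (p - 1)
        rw [Real.rpow_one] at h
        rw [show (1:ℝ) + (p - 1) = p by ring] at h
        exact h
      have hexp : (-(1 / (p - 1))) * p = (-(1 / (p - 1))) - 1 := by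
        linear_combination hc
      rw [hmulpow, hgp, hexp]
      field_simp
  -- slice regularity of φ
  have hφslice : ∀ x : ℝ, ContDiff ℝ (⊤ : ℕ∞) (fun s => φ (x, s)) := fun x =>
    hφ.comp (ContDiff.prodMk (contDiff_const (c := x)) contDiff_id)
  have hφd : ∀ x t, HasDerivAt (fun s => φ (x, s)) (deriv (fun s => φ (x, s)) t) t :=
    fun x t => ((hφslice x).differentiable (by simp) t).hasDerivAt
  have hφdc : ∀ x, Continuous (deriv (fun s => φ (x, s))) := fun x =>
    (hφslice x).continuous_deriv (by simp)
  -- support facts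
  have hts2 : ∀ q : ℝ × ℝ, q ∈ tsupport φ → 0 ≤ q.2 := by
    intro q hq
    have h1 : tsupport φ ⊆ closure {q : ℝ × ℝ | 0 < q.2} := closure_mono hφsupp
    have h2 : closure {q : ℝ × ℝ | 0 < q.2} ⊆ {q : ℝ × ℝ | 0 ≤ q.2} :=
      closure_minimal (fun q hq => show (0:ℝ) ≤ q.2 from le_of_lt hq) (isClosed_le continuous_const continuous_snd)
    exact h2 (h1 hq)
  obtain ⟨r, hr⟩ := (hφc.image continuous_snd).isBounded.subset_closedBall 0
  set R : ℝ := max r 0 with hRdef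
  have hK2 : Prod.snd '' tsupport φ ⊆ Set.Icc (-R) R := by
    intro s hs
    have := hr hs
    rw [Real.closedBall_eq_Icc] at this
    constructor
    · have := this.1; simp only [zero_sub] at this
      have : -r ≤ s := this
      have : -R ≤ -r := by simp [hRdef]
      linarith [(Real.closedBall_eq_Icc (x := (0:ℝ)) (r := r)) ▸ hr hs]
    · have h1 : s ≤ 0 + r := this.2
      have : r ≤ R := le_max_left _ _
      linarith
  have hout : ∀ x t, t ∉ Set.Icc (-R) R → (fun s => φ (x, s)) =ᶠ[nhds t] fun _ => (0:ℝ) := by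
    intro x t ht
    have hopen : IsOpen ((Set.Icc (-R) R)ᶜ) := isClosed_Icc.isOpen_compl
    filter_upwards [hopen.mem_nhds ht] with s hs
    by_contra h
    exact hs (hK2 ⟨(x, s), subset_closure (Function.mem_support.2 h), rfl⟩)
  have hneg : ∀ x t, t < 0 → (fun s => φ (x, s)) =ᶠ[nhds t] fun _ => (0:ℝ) := by
    intro x t ht
    filter_upwards [Iio_mem_nhds ht] with s hs
    by_contra h
    have := hφsupp (Function.mem_support.2 h)
    simp only [Set.mem_setOf_eq] at this
    exact absurd this (not_lt.2 hs.le)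
  have hzero : ∀ x t, ((fun s => φ (x, s)) =ᶠ[nhds t] fun _ => (0:ℝ)) →
      φ (x, t) = 0 ∧ deriv (fun s => φ (x, s)) t = 0 := by
    intro x t h
    refine ⟨h.self_of_nhds, ?_⟩
    rw [h.deriv_eq, deriv_const]
  -- bounds on u
  have hu01 : ∀ x t, 0 ≤ t → 0 ≤ u x t ∧ u x t ≤ 1 := by
    intro x t ht
    have hX1 := hXpos x t ht
    constructor
    · rw [hu]; exact mul_nonneg (hg0 x) (Real.rpow_nonneg (by linarith) _)
    · rw [hu]
      have h1 : ((p - 1) * t * g x ^ (p - 1) + 1) ^ (-(1 / (p - 1))) ≤ 1 :=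
        Real.rpow_le_one_of_one_le_of_nonpos hX1 (neg_nonpos.2 (by positivity))
      have h2 : 0 ≤ ((p - 1) * t * g x ^ (p - 1) + 1) ^ (-(1 / (p - 1))) :=
        Real.rpow_nonneg (by linarith) _
      nlinarith [hg0 x, hg1 x]
  -- per-x identity
  have key : ∀ x : ℝ, (∫ t, u x t * deriv (fun s => φ (x, s)) t) =
      ∫ t, u x t ^ p * φ (x, t) := by
    intro x
    have hucont : ∀ t : ℝ, 0 ≤ t → ContinuousAt (u x) t := by
      intro t ht
      rcases eq_or_lt_of_le (hg0 x) with h0 | hgx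
      · have hux : u x = fun _ => (0:ℝ) := funext fun s => by simp [hu, ← h0]
        rw [hux]; exact continuousAt_const
      · have hX : (0:ℝ) < (p - 1) * t * g x ^ (p - 1) + 1 :=
          lt_of_lt_of_le one_pos (hXpos x t ht)
        have hux : u x = fun s => g x * ((p - 1) * s * g x ^ (p - 1) + 1) ^ (-(1 / (p - 1))) :=
          funext fun s => hu x s
        rw [hux]
        refine continuousAt_const.mul (ContinuousAt.rpow_const ?_ (Or.inl hX.ne'))
        fun_prop
    have hmulcont : ∀ (w h : ℝ → ℝ), (∀ t, 0 ≤ t → ContinuousAt w t) → Continuous h →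
        (∀ s, s < 0 → h s = 0) → Continuous (fun t => w t * h t) := by
      intro w h hw hh hz
      rw [continuous_iff_continuousAt]
      intro t
      rcases lt_or_ge t 0 with ht | ht
      · have hev : (fun t => w t * h t) =ᶠ[nhds t] fun _ => (0:ℝ) := by
          filter_upwards [Iio_mem_nhds ht] with s hs
          simp [hz s hs]
        exact ContinuousAt.congr continuousAt_const hev.symm
      · exact (hw t ht).mul hh.continuousAt
    have hI1cont : Continuous (fun t => u x t * deriv (fun s => φ (x, s)) t) :=
      hmulcont _ _ hucont (hφdc x) (fun s hs => (hzero x s (hneg x s hs)).2)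
    have hI2cont : Continuous (fun t => u x t ^ p * φ (x, t)) :=
      hmulcont _ _ (fun t ht => (hucont t ht).rpow_const (Or.inr (by linarith)))
        (hφ.continuous.comp (continuous_const.prodMk continuous_id))
        (fun s hs => (hzero x s (hneg x s hs)).1)
    have hsupp1 : ∀ t, t ∉ Set.Icc (-R) R → u x t * deriv (fun s => φ (x, s)) t = 0 := by
      intro t ht; rw [(hzero x t (hout x t ht)).2, mul_zero]
    have hsupp2' : ∀ t, t ∉ Set.Icc (-R) R → u x t ^ p * φ (x, t) = 0 := by
      intro t ht; rw [(hzero x t (hout x t ht)).1, mul_zero]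
    have hI1int : Integrable (fun t => u x t * deriv (fun s => φ (x, s)) t) :=
      hI1cont.integrable_of_hasCompactSupport
        (HasCompactSupport.intro isCompact_Icc hsupp1)
    have hI2int : Integrable (fun t => u x t ^ p * φ (x, t)) :=
      hI2cont.integrable_of_hasCompactSupport
        (HasCompactSupport.intro isCompact_Icc hsupp2')
    set f : ℝ → ℝ := fun t => u x t * φ (x, t) with hfdef
    have hFd : ∀ t, HasDerivAt f
        (u x t * deriv (fun s => φ (x, s)) t - u x t ^ p * φ (x, t)) t := by
      intro t
      rcases lt_or_ge t 0 with ht | ht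
      · have hz := hzero x t (hneg x t ht)
        have hfz : f =ᶠ[nhds t] fun _ => (0:ℝ) := by
          filter_upwards [Iio_mem_nhds ht] with s hs
          simp [hfdef, (hzero x s (hneg x s hs)).1]
        have hd : HasDerivAt f 0 t := (hasDerivAt_const t (0:ℝ)).congr_of_eventuallyEq hfz
        simpa [hz.1, hz.2] using hd
      · have := (hud x t ht).mul (hφd x t)
        refine this.congr_deriv ?_
        ring
    have hFint : Integrable (fun t =>
        u x t * deriv (fun s => φ (x, s)) t - u x t ^ p * φ (x, t)) := hI1int.sub hI2int
    have hsub : Function.support (fun t =>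
        u x t * deriv (fun s => φ (x, s)) t - u x t ^ p * φ (x, t))
        ⊆ Set.Ioc (-(R + 1)) (R + 1) := by
      intro t ht
      by_contra hmem
      apply ht
      have hticc : t ∉ Set.Icc (-R) R := by
        intro h
        exact hmem ⟨by linarith [h.1], by linarith [h.2]⟩
      simp [hsupp1 t hticc, hsupp2' t hticc]
    have heq0 : (∫ t, (u x t * deriv (fun s => φ (x, s)) t - u x t ^ p * φ (x, t))) = 0 := by
      rw [← intervalIntegral.integral_eq_integral_of_support_subset hsub]
      rw [intervalIntegral.integral_eq_sub_of_hasDerivAt (fun t _ => hFd t)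
        hFint.intervalIntegrable]
      have h1 : f (R + 1) = 0 := by
        have : (R + 1) ∉ Set.Icc (-R) R := by
          intro h; have := h.2
          have hR0 : 0 ≤ R := le_max_right r 0
          linarith
        show u x (R + 1) * φ (x, R + 1) = 0
        rw [(hzero x _ (hout x _ this)).1, mul_zero]
      have h2 : f (-(R + 1)) = 0 := by
        have : (-(R + 1)) ∉ Set.Icc (-R) R := by
          intro h; have := h.1
          have hR0 : 0 ≤ R := le_max_right r 0
          linarith
        show u x (-(R + 1)) * φ (x, -(R + 1)) = 0
        rw [(hzero x _ (hout x _ this)).1, mul_zero]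
      rw [h1, h2, sub_zero]
    rw [integral_sub hI1int hI2int] at heq0
    linarith
  -- global measurability and integrability
  have hDeq : ∀ q : ℝ × ℝ, deriv (fun s => φ (q.1, s)) q.2 = fderiv ℝ φ q ((0:ℝ), (1:ℝ)) := by
    intro q
    have h1 : HasDerivAt (fun s : ℝ => (q.1, s)) ((0:ℝ), (1:ℝ)) q.2 :=
      HasDerivAt.prodMk (hasDerivAt_const q.2 q.1) (hasDerivAt_id q.2)
    have h2 := ((hφ.differentiable (by simp) q).hasFDerivAt).comp_hasDerivAt q.2 h1
    exact h2.deriv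
  have hDcont : Continuous fun q : ℝ × ℝ => fderiv ℝ φ q ((0:ℝ), (1:ℝ)) :=
    (hφ.continuous_fderiv (by simp)).clm_apply continuous_const
  have hDC : HasCompactSupport fun q : ℝ × ℝ => fderiv ℝ φ q ((0:ℝ), (1:ℝ)) :=
    hφc.fderiv_apply ℝ ((0:ℝ), (1:ℝ))
  obtain ⟨M1, hM1⟩ := hDC.exists_bound_of_continuous hDcont
  obtain ⟨M2, hM2⟩ := hφc.exists_bound_of_continuous hφ.continuous
  rw [MeasureTheory.Measure.volume_eq_prod]
  have hgm2 : AEStronglyMeasurable (fun q : ℝ × ℝ => g q.1) (volume.prod volume) :=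
    hgint.aestronglyMeasurable.comp_fst
  have hUm : AEStronglyMeasurable (fun q : ℝ × ℝ => u q.1 q.2) (volume.prod volume) := by
    have h1 : AEMeasurable (fun q : ℝ × ℝ => g q.1) (volume.prod volume) := hgm2.aemeasurable
    have h2 : AEMeasurable (fun q : ℝ × ℝ =>
        ((p - 1) * q.2 * g q.1 ^ (p - 1) + 1) ^ (-(1 / (p - 1)))) (volume.prod volume) :=
      (((measurable_snd.aemeasurable.const_mul (p - 1)).mul (h1.pow aemeasurable_const)).add
        aemeasurable_const).pow aemeasurable_const
    have huxeq : (fun q : ℝ × ℝ => u q.1 q.2) =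
        fun q => g q.1 * ((p - 1) * q.2 * g q.1 ^ (p - 1) + 1) ^ (-(1 / (p - 1))) :=
      funext fun q => hu q.1 q.2
    rw [huxeq]
    exact (h1.mul h2).aestronglyMeasurable
  have hKm : MeasurableSet (tsupport φ) := (isClosed_tsupport φ).measurableSet
  have hKfin : (volume.prod volume) (tsupport φ) < ⊤ := by
    rw [← MeasureTheory.Measure.volume_eq_prod]
    exact hφc.measure_lt_top
  have hBint : ∀ C : ℝ, Integrable ((tsupport φ).indicator fun _ => C) (volume.prod volume) := by
    intro C
    rw [integrable_indicator_iff hKm]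
    exact integrableOn_const hKfin.ne
  have hJ1 : Integrable (fun q : ℝ × ℝ => u q.1 q.2 * deriv (fun s => φ (q.1, s)) q.2)
      (volume.prod volume) := by
    refine Integrable.mono' (hBint M1) ?_ (Filter.Eventually.of_forall fun q => ?_)
    · exact hUm.mul (hDcont.aestronglyMeasurable.congr
        (Filter.Eventually.of_forall fun q => (hDeq q).symm))
    · by_cases hq : q ∈ tsupport φ
      · rw [Set.indicator_of_mem hq]
        have hub := hu01 q.1 q.2 (hts2 q hq)
        have hD : ‖deriv (fun s => φ (q.1, s)) q.2‖ ≤ M1 := by rw [hDeq]; exact hM1 q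
        rw [norm_mul]
        have hun : ‖u q.1 q.2‖ ≤ 1 := by
          rw [Real.norm_eq_abs, abs_le]; exact ⟨by linarith [hub.1], hub.2⟩
        calc ‖u q.1 q.2‖ * ‖deriv (fun s => φ (q.1, s)) q.2‖
            ≤ 1 * M1 := mul_le_mul hun hD (norm_nonneg _) one_pos.le
          _ = M1 := one_mul _
      · rw [Set.indicator_of_notMem hq]
        have hD0 : fderiv ℝ φ q = 0 := by
          by_contra h
          exact hq (support_fderiv_subset ℝ (Function.mem_support.2 h))
        have : deriv (fun s => φ (q.1, s)) q.2 = 0 := by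
          rw [hDeq, hD0]; simp
        simp [this]
  have hJ2 : Integrable (fun q : ℝ × ℝ => u q.1 q.2 ^ p * φ q) (volume.prod volume) := by
    refine Integrable.mono' (hBint M2) ?_ (Filter.Eventually.of_forall fun q => ?_)
    · exact ((hUm.aemeasurable.pow aemeasurable_const).aestronglyMeasurable).mul
        hφ.continuous.aestronglyMeasurable
    · by_cases hq : q ∈ tsupport φ
      · rw [Set.indicator_of_mem hq]
        have hub := hu01 q.1 q.2 (hts2 q hq)
        have hup : ‖u q.1 q.2 ^ p‖ ≤ 1 := by
          rw [Real.norm_eq_abs, abs_le]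
          constructor
          · have := Real.rpow_nonneg hub.1 p; linarith
          · exact Real.rpow_le_one hub.1 hub.2 (by linarith)
        rw [norm_mul]
        calc ‖u q.1 q.2 ^ p‖ * ‖φ q‖ ≤ 1 * M2 :=
              mul_le_mul hup (hM2 q) (norm_nonneg _) one_pos.le
          _ = M2 := one_mul _
      · rw [Set.indicator_of_notMem hq]
        have : φ q = 0 := by
          by_contra h
          exact hq (subset_closure (Function.mem_support.2 h))
        simp [this]
  rw [integral_prod _ hJ1, integral_prod _ hJ2]
  exact integral_congr_ae (Filter.Eventually.of_forall fun x => key x)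
end

section
/- Let g : ℝ → [0,1] be measurable and integrable, t > 0 fixed, and for each integer p ≥ 2 define v_p(x) = g(x)·((p-1)·t·g(x)^{p-1} + 1)^{-1/(p-1)}. Then v_p converges to g pointwise a.e. and in L^1(ℝ) as p → ∞ (on the set where g ≤ 1). -/
/-!
For `e = p - 1 ≥ 0` and `0 ≤ g ≤ 1` the factor `(e t g^e + 1)^(-1/e)` lies between
`c_p = (e t + 1)^(-1/e)` and `1`, and `c_p → 1` because `log (e t + 1) / e → 0`.
Hence `c_p g ≤ v_p ≤ g`, which gives pointwise convergence and the bound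
`∫ |v_p - g| ≤ (1 - c_p) ∫ g → 0`.
-/

open MeasureTheory Filter Topology

lemma tendsto_mul_add_one_rpow_neg_inv {t : ℝ} (ht : 0 < t) :
    Tendsto (fun e : ℝ => (e * t + 1) ^ (-(1 / e))) atTop (𝓝 1) := by
  -- with `y = e * t + 1` the exponent is `-t / (y - 1)`
  have hy : Tendsto (fun e : ℝ => e * t + 1) atTop atTop :=
    tendsto_atTop_add_const_right _ _ (tendsto_id.atTop_mul_const ht)
  refine ((tendsto_rpow_div_mul_add (-t) 1 (-1) zero_ne_one).comp hy).congr' ?_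
  filter_upwards [eventually_gt_atTop 0] with e he
  simp only [Function.comp_apply]
  congr 1
  field_simp
  ring

lemma mul_add_one_rpow_neg_inv_mem_Icc {e t s : ℝ} (he : 0 ≤ e) (ht : 0 ≤ t)
    (hs0 : 0 ≤ s) (hs1 : s ≤ 1) :
    (e * t * s ^ e + 1) ^ (-(1 / e)) ∈ Set.Icc ((e * t + 1) ^ (-(1 / e))) 1 := by
  have hexp : -(1 / e) ≤ 0 := neg_nonpos.mpr (by positivity)
  have hone : 1 ≤ e * t * s ^ e + 1 := by
    simp only [le_add_iff_nonneg_left]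
    positivity
  have hbase : e * t * s ^ e + 1 ≤ e * t + 1 := by
    have := mul_le_of_le_one_right (mul_nonneg he ht) (Real.rpow_le_one hs0 hs1 he)
    linarith
  exact ⟨Real.rpow_le_rpow_of_nonpos (by linarith) hbase hexp,
    Real.rpow_le_one_of_one_le_of_nonpos hone hexp⟩

lemma tendsto_of_mul_le_of_le {ι : Type*} {l : Filter ι} {c f : ι → ℝ} {a : ℝ}
    (hc : Tendsto c l (𝓝 1)) (hlow : ∀ᶠ i in l, c i * a ≤ f i) (hup : ∀ᶠ i in l, f i ≤ a) :
    Tendsto f l (𝓝 a) := by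
  refine tendsto_of_tendsto_of_tendsto_of_le_of_le' ?_ tendsto_const_nhds hlow hup
  simpa using hc.mul_const a

lemma tendsto_integral_abs_sub_of_mul_le_of_le {ι α : Type*} [MeasurableSpace α]
    {μ : Measure α} {l : Filter ι} {c : ι → ℝ} {f : ι → α → ℝ} {g : α → ℝ}
    (hg : Integrable g μ) (hc : Tendsto c l (𝓝 1))
    (hlow : ∀ᶠ i in l, ∀ x, c i * g x ≤ f i x) (hup : ∀ᶠ i in l, ∀ x, f i x ≤ g x) :
    Tendsto (fun i => ∫ x, |f i x - g x| ∂μ) l (𝓝 0) := by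
  have hbound : Tendsto (fun i => (1 - c i) * ∫ x, g x ∂μ) l (𝓝 0) := by
    simpa using ((tendsto_const_nhds (x := (1 : ℝ))).sub hc).mul_const (∫ x, g x ∂μ)
  refine tendsto_of_tendsto_of_tendsto_of_le_of_le' tendsto_const_nhds hbound
    (Eventually.of_forall fun i => integral_nonneg fun x => abs_nonneg _) ?_
  filter_upwards [hlow, hup] with i hlow hup
  rw [← integral_const_mul]
  -- `integral_mono_of_nonneg` spares us the measurability of `f i`
  refine integral_mono_of_nonneg (Eventually.of_forall fun x => abs_nonneg _)
    (hg.const_mul _) (Eventually.of_forall fun x => ?_)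
  dsimp only
  rw [abs_sub_comm, abs_of_nonneg (sub_nonneg.mpr (hup x))]
  linarith [hlow x]

theorem stmt_14_general (g : ℝ → ℝ) (hgint : Integrable g)
    (hg0 : ∀ x, 0 ≤ g x) (hg1 : ∀ x, g x ≤ 1) (t : ℝ) (ht : 0 < t)
    (v : ℕ → ℝ → ℝ)
    (hv : ∀ p : ℕ, ∀ x : ℝ, v p x =
      g x * (((p : ℝ) - 1) * t * g x ^ ((p : ℝ) - 1) + 1) ^ (-(1 / ((p : ℝ) - 1)))) :
    (∀ᵐ x : ℝ, Tendsto (fun p : ℕ => v p x) atTop (nhds (g x))) ∧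
    Tendsto (fun p : ℕ => ∫ x : ℝ, |v p x - g x|) atTop (nhds 0) := by
  set c : ℕ → ℝ := fun p => (((p : ℝ) - 1) * t + 1) ^ (-(1 / ((p : ℝ) - 1)))
  have hc : Tendsto c atTop (𝓝 1) :=
    (tendsto_mul_add_one_rpow_neg_inv ht).comp
      (tendsto_atTop_add_const_right _ _ tendsto_natCast_atTop_atTop)
  have hbounds : ∀ᶠ p in atTop, ∀ x, c p * g x ≤ v p x ∧ v p x ≤ g x := by
    filter_upwards [eventually_ge_atTop 1] with p hp x
    have hmem := mul_add_one_rpow_neg_inv_mem_Icc (e := (p : ℝ) - 1)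
      (sub_nonneg.mpr (by exact_mod_cast hp)) ht.le (hg0 x) (hg1 x)
    rw [hv, mul_comm (c p)]
    exact ⟨mul_le_mul_of_nonneg_left hmem.1 (hg0 x), mul_le_of_le_one_right (hg0 x) hmem.2⟩
  have hlow := hbounds.mono fun p h x => (h x).1
  have hup := hbounds.mono fun p h x => (h x).2
  exact ⟨Eventually.of_forall fun x => tendsto_of_mul_le_of_le hc
      (hlow.mono fun p h => h x) (hup.mono fun p h => h x),
    tendsto_integral_abs_sub_of_mul_le_of_le hgint hc hlow hup⟩

theorem stmt_14 (g : ℝ → ℝ) (hgint : Integrable g) (hgmeas : Measurable g)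
    (hg0 : ∀ x, 0 ≤ g x) (hg1 : ∀ x, g x ≤ 1) (t : ℝ) (ht : 0 < t)
    (v : ℕ → ℝ → ℝ)
    (hv : ∀ p : ℕ, ∀ x : ℝ, v p x =
      g x * (((p : ℝ) - 1) * t * g x ^ ((p : ℝ) - 1) + 1) ^ (-(1 / ((p : ℝ) - 1)))) :
    (∀ᵐ x : ℝ, Tendsto (fun p : ℕ => v p x) atTop (nhds (g x))) ∧
    Tendsto (fun p : ℕ => ∫ x : ℝ, |v p x - g x|) atTop (nhds 0) :=
  stmt_14_general g hgint hg0 hg1 t ht v hv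
end
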